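/- arXiv:1202.5626 — 4 statements merged into one kernel-verified Lean document; each statement's English description precedes it below -/
import Mathlib

section
/- Let G be a group and H a subgroup of finite index in G. If every normalized right transversal of H in G is also a left transversal of H in G, then H is normal in G. Conversely, if H is normal, every right transversal is a left transversal. -/
/-!
If `H` is normal, right and left cosets coincide, so right transversals are left transversals.
If `H` is not normal, pick `h ∈ H` and `g` with `g * h * g⁻¹ ∉ H`. Then `1`, `g` and `g * h` lie in
three distinct right cosets, so they extend to a normalized right transversal; but `g` and `g * h`
lie in the same left coset `gH`, so this transversal is not a left transversal.
-/

variable {G : Type*} [Group G]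

/-- `S` is a normalized right transversal of `H` in `G`: `1 ∈ S` and `S` contains
exactly one element of each right coset `Hg` (note `s ∈ Hg ↔ s * g⁻¹ ∈ H`). -/
def IsNRT (H : Subgroup G) (S : Set G) : Prop :=
  (1 : G) ∈ S ∧ ∀ g : G, ∃! s, s ∈ S ∧ s * g⁻¹ ∈ H

/-- `S` is a left transversal: exactly one element in each left coset `gH`. -/
def IsLeftT (H : Subgroup G) (S : Set G) : Prop :=
  ∀ g : G, ∃! s, s ∈ S ∧ g⁻¹ * s ∈ H

/-- `op` is the induced operation on `S`: `op x y` is the element of `S ∩ Hxy`. -/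
def IsOp (H : Subgroup G) (S : Set G) (op : G → G → G) : Prop :=
  ∀ x ∈ S, ∀ y ∈ S, op x y ∈ S ∧ op x y * (x * y)⁻¹ ∈ H

/-- `sig x h = σ_x(h)`: the `H`-part in the factorization `x*h = σ_x(h)·(xθh)`,
with `xθh = (sig x h)⁻¹ * (x*h) ∈ S`. -/
def IsSig (H : Subgroup G) (S : Set G) (sig : G → G → G) : Prop :=
  ∀ x ∈ S, ∀ h ∈ H, sig x h ∈ H ∧ (sig x h)⁻¹ * (x * h) ∈ S

open QuotientGroup

theorem isLeftT_of_isNRT {H : Subgroup G} (hH : H.Normal) {S : Set G} (hS : IsNRT H S) :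
    IsLeftT H S := fun g =>
  (existsUnique_congr fun _ => and_congr_right' hH.mem_comm_iff).mp (hS.2 g)

theorem isNRT_range_of_section {H : Subgroup G} {f : Quotient (rightRel H) → G}
    (hf : ∀ q, (⟦f q⟧ : Quotient (rightRel H)) = q) (h1 : (1 : G) ∈ Set.range f) :
    IsNRT H (Set.range f) := by
  have hmk : ∀ s x : G, s * x⁻¹ ∈ H ↔ (⟦x⟧ : Quotient (rightRel H)) = ⟦s⟧ := fun s x =>
    rightRel_apply.symm.trans Quotient.eq.symm
  refine ⟨h1, fun x => ⟨f ⟦x⟧, ⟨⟨_, rfl⟩, (hmk _ x).mpr (hf _).symm⟩, ?_⟩⟩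
  rintro _ ⟨⟨q, rfl⟩, hq⟩
  rw [(hmk _ x).mp hq, hf]

theorem exists_isNRT_superset {H : Subgroup G} {T : Set G} (h1 : (1 : G) ∈ T)
    (hT : ∀ x ∈ T, ∀ y ∈ T, x * y⁻¹ ∈ H → x = y) : ∃ S, IsNRT H S ∧ T ⊆ S := by
  let mkT : T → Quotient (rightRel H) := fun t => ⟦(t : G)⟧
  have hinj : mkT.Injective := fun s t hst =>
    Subtype.ext (hT s s.2 t t.2 (rightRel_apply.mp (Quotient.exact hst.symm)))
  let f := Function.extend mkT Subtype.val Quotient.out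
  have hf_mkT : ∀ t : T, f (mkT t) = t := hinj.extend_apply _ _
  have hsection : ∀ q, (⟦f q⟧ : Quotient (rightRel H)) = q := by
    intro q
    by_cases hq : ∃ t, mkT t = q
    · obtain ⟨t, rfl⟩ := hq
      rw [hf_mkT]
    · rw [show f q = q.out from Function.extend_apply' _ _ _ hq, Quotient.out_eq]
  have hT_range : T ⊆ Set.range f := fun t ht => ⟨mkT ⟨t, ht⟩, hf_mkT ⟨t, ht⟩⟩
  exact ⟨_, isNRT_range_of_section hsection (hT_range h1), hT_range⟩

theorem normal_of_forall_isNRT_isLeftT {H : Subgroup G}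
    (hyp : ∀ S : Set G, IsNRT H S → IsLeftT H S) : H.Normal := by
  refine ⟨fun h hh g => by_contra fun hc => ?_⟩
  have hg : g ∉ H := fun hg => hc (H.mul_mem (H.mul_mem hg hh) (H.inv_mem hg))
  have hgh : g * h ∉ H := fun hgh => hg (by simpa using H.mul_mem hgh (H.inv_mem hh))
  have hdistinct : ∀ x ∈ ({1, g, g * h} : Set G), ∀ y ∈ ({1, g, g * h} : Set G),
      x * y⁻¹ ∈ H → x = y := by
    simp only [Set.mem_insert_iff, Set.mem_singleton_iff]
    rintro x (hx | hx | hx) y (hy | hy | hy) hxy <;> subst x y <;> first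
      | rfl
      | contradiction
      | simp only [one_mul, mul_one, inv_one, inv_mem_iff] at hxy; contradiction
      | exact absurd (by simpa [mul_assoc] using H.inv_mem hxy) hc
  obtain ⟨S, hS, hTS⟩ := exists_isNRT_superset (by simp) hdistinct
  obtain ⟨s, -, hs⟩ := hyp S hS g
  have hh1 : h = 1 := by
    have hgs : g = s := hs g ⟨hTS (by simp), by simp⟩
    have hghs : g * h = s := hs (g * h) ⟨hTS (by simp), by simpa using hh⟩
    simpa using hghs.trans hgs.symm
  exact hc (by simp [hh1])

theorem stmt_11_general (H : Subgroup G) :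
    (∀ S : Set G, IsNRT H S → IsLeftT H S) ↔ H.Normal :=
  ⟨normal_of_forall_isNRT_isLeftT, fun hH _ => isLeftT_of_isNRT hH⟩

theorem stmt_11 (H : Subgroup G) [H.FiniteIndex] :
    (∀ S : Set G, IsNRT H S → IsLeftT H S) ↔ H.Normal :=
  stmt_11_general H
end

section
/- Let G be a finite group and H a subgroup of G. If all normalized right transversals of H in G are pairwise isomorphic (as right loops under the induced operation x∘y = unique element of S ∩ Hxy), then H is normal in G. -/
variable {G : Type*} [Group G]

/-
By Hall's marriage theorem, applied to the relation "the right coset `Hx` and the left coset `yH`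
meet", `H` has a normalized right transversal `S` that is also a left transversal. In the loop
`(S, ∘)` every `x` then has a right inverse: the `y ∈ S ∩ x⁻¹H` satisfies `x ∘ y = 1`, i.e.
`x * y ∈ H`. An isomorphism fixes `1`, so it carries this property to any other normalized right
transversal `T`. Such a `T` meets every left coset, hence by counting is a left transversal.
But if `H` is not normal, choose `h ∈ H` and `g` with `g * h * g⁻¹ ∉ H`: the elements `1`, `g`,
`g * h` lie in distinct right cosets and extend to a normalized right transversal containing two
elements of the left coset `gH`.
-/

open Function Set
open scoped Pointwise

theorem Function.Surjective.bijOn_univ_iff_existsUnique {α β : Type*} {f : α → β}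
    (hf : Surjective f) {S : Set α} :
    BijOn f S univ ↔ ∀ a, ∃! s, s ∈ S ∧ f s = f a := by
  constructor
  · intro h a
    obtain ⟨s, hs, hsa⟩ := h.surjOn (mem_univ (f a))
    exact ⟨s, ⟨hs, hsa⟩, fun t ⟨ht, hta⟩ ↦ h.injOn ht hs (hta.trans hsa.symm)⟩
  · intro h
    refine ⟨mapsTo_univ _ _, fun s hs t ht hst ↦ (h s).unique ⟨hs, rfl⟩ ⟨ht, hst.symm⟩,
      fun b _ ↦ ?_⟩
    obtain ⟨a, rfl⟩ := hf b
    obtain ⟨s, ⟨hs, hsa⟩, -⟩ := h a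
    exact ⟨s, hs, hsa⟩

theorem Set.bijOn_range_univ {ι α β : Type*} {x : ι → α} {f : α → β}
    (h : Bijective (f ∘ x)) : BijOn f (range x) univ := by
  refine ⟨mapsTo_univ _ _, ?_, fun b _ ↦ ?_⟩
  · rw [← image_univ]
    exact h.injective.injOn.image_of_comp
  · obtain ⟨i, hi⟩ := h.surjective b
    exact ⟨x i, mem_range_self i, hi⟩

section Transversals

variable {H : Subgroup G} {S T : Set G}

theorem isLeftT_iff_bijOn_mk :
    IsLeftT H S ↔ BijOn (QuotientGroup.mk : G → G ⧸ H) S univ := by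
  rw [QuotientGroup.mk_surjective.bijOn_univ_iff_existsUnique]
  exact forall_congr' fun g ↦ existsUnique_congr fun s ↦
    and_congr_right' (by rw [eq_comm, QuotientGroup.eq])

-- Right cosets are handled through inversion: `s ∈ H g` iff `s⁻¹ ∈ g⁻¹ H`.
theorem isNRT_iff_bijOn_mk_inv :
    IsNRT H S ↔ 1 ∈ S ∧ BijOn (fun s : G ↦ ((s⁻¹ : G) : G ⧸ H)) S univ := by
  rw [Surjective.bijOn_univ_iff_existsUnique (f := fun s : G ↦ ((s⁻¹ : G) : G ⧸ H))
    (QuotientGroup.mk_surjective.comp inv_surjective)]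
  exact and_congr_right' <| forall_congr' fun g ↦ existsUnique_congr fun s ↦
    and_congr_right' (by simp only [QuotientGroup.eq, inv_inv])

theorem isNRT_range {y : G ⧸ H → G} (h1 : 1 ∈ range y) (hy : ∀ q, (((y q)⁻¹ : G) : G ⧸ H) = q) :
    IsNRT H (range y) :=
  isNRT_iff_bijOn_mk_inv.mpr
    ⟨h1, bijOn_range_univ <| (show (fun s : G ↦ ((s⁻¹ : G) : G ⧸ H)) ∘ y = id from funext hy) ▸
      bijective_id⟩

theorem IsNRT.eq_of_mul_inv_mem (hS : IsNRT H S) {a b : G} (ha : a ∈ S) (hb : b ∈ S)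
    (hab : a * b⁻¹ ∈ H) : a = b :=
  (hS.2 b).unique ⟨ha, hab⟩ ⟨hb, by simp⟩

theorem IsNRT.exists_isOp (hS : IsNRT H S) : ∃ op, IsOp H S op :=
  ⟨fun x y ↦ (hS.2 (x * y)).choose, fun x _ y _ ↦ (hS.2 (x * y)).choose_spec.1⟩

theorem IsOp.eq_one_iff {op : G → G → G} (hop : IsOp H S op) (hS : IsNRT H S) {x y : G}
    (hx : x ∈ S) (hy : y ∈ S) : op x y = 1 ↔ x * y ∈ H := by
  obtain ⟨hmem, hcoset⟩ := hop x hx y hy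
  constructor
  · intro h
    rwa [h, one_mul, inv_mem_iff] at hcoset
  · intro h
    exact hS.eq_of_mul_inv_mem hmem hS.1 (by simpa [mul_assoc] using H.mul_mem hcoset h)

theorem IsOp.forall_exists_mul_mem_of_iso {opS opT : G → G → G} (hS : IsNRT H S)
    (hT : IsNRT H T) (hopS : IsOp H S opS) (hopT : IsOp H T opT) {p : G → G}
    (hp : BijOn p S T) (hp1 : p 1 = 1) (hhom : ∀ x ∈ S, ∀ y ∈ S, p (opS x y) = opT (p x) (p y))
    (hinv : ∀ x ∈ S, ∃ y ∈ S, x * y ∈ H) : ∀ x ∈ T, ∃ y ∈ T, x * y ∈ H := by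
  intro x hx
  obtain ⟨x, hxS, rfl⟩ := hp.surjOn hx
  obtain ⟨y, hyS, hxy⟩ := hinv x hxS
  refine ⟨p y, hp.mapsTo hyS, ?_⟩
  rw [← hopT.eq_one_iff hT (hp.mapsTo hxS) (hp.mapsTo hyS), ← hhom x hxS y hyS,
    (hopS.eq_one_iff hS hxS hyS).mpr hxy, hp1]

theorem IsLeftT.exists_mul_mem (hS : IsLeftT H S) (x : G) : ∃ y ∈ S, x * y ∈ H := by
  obtain ⟨y, ⟨hy, hxy⟩, -⟩ := hS x⁻¹
  exact ⟨y, hy, by simpa using hxy⟩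

theorem IsNRT.isLeftT_of_exists_mul_mem [Finite G] (hS : IsNRT H S)
    (hinv : ∀ x ∈ S, ∃ y ∈ S, x * y ∈ H) : IsLeftT H S := by
  have hsurj : SurjOn (QuotientGroup.mk : G → G ⧸ H) S univ := by
    intro q _
    obtain ⟨g, rfl⟩ := QuotientGroup.mk_surjective q
    obtain ⟨z, ⟨hz, hzg⟩, -⟩ := hS.2 g⁻¹
    obtain ⟨y, hy, hzy⟩ := hinv z hz
    exact ⟨y, hy, QuotientGroup.eq.mpr (by simpa [mul_assoc] using H.mul_mem (H.inv_mem hzy) hzg)⟩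
  rw [isLeftT_iff_bijOn_mk]
  refine ⟨mapsTo_univ _ _, injOn_of_ncard_image_eq ?_, hsurj⟩
  rw [hsurj.image_eq_of_mapsTo (mapsTo_univ _ _), (isNRT_iff_bijOn_mk_inv.mp hS).2.ncard_eq]

theorem exists_injective_mk_inv_eq_mk [Finite G] (H : Subgroup G) :
    ∃ f : G ⧸ H → G ⧸ H, Injective f ∧
      ∀ q, ∃ x : G, ((x⁻¹ : G) : G ⧸ H) = q ∧ (x : G ⧸ H) = f q := by
  classical
  have := Fintype.ofFinite (G ⧸ H)
  -- Hall's condition: inverting the `#A * |H|` elements of the cosets in `A` lands them in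
  -- cosets related to `A`.
  refine (Fintype.all_card_le_filter_rel_iff_exists_injective
    fun q l ↦ ∃ x : G, ((x⁻¹ : G) : G ⧸ H) = q ∧ (x : G ⧸ H) = l).mp fun A ↦ ?_
  have hsub : (QuotientGroup.mk ⁻¹' (A : Set (G ⧸ H)))⁻¹ ⊆ QuotientGroup.mk ⁻¹'
      (({l | ∃ q ∈ A, ∃ x : G, ((x⁻¹ : G) : G ⧸ H) = q ∧ (x : G ⧸ H) = l} : Finset _) :
        Set (G ⧸ H)) := by
    intro x hx
    simp only [mem_preimage, Finset.coe_filter, Finset.mem_univ, true_and, mem_ofPred_eq]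
    exact ⟨_, hx, x, rfl, rfl⟩
  have hcard := Nat.card_mono (toFinite _) hsub
  rw [natCard_inv, QuotientGroup.card_preimage_mk, QuotientGroup.card_preimage_mk] at hcard
  simpa using Nat.le_of_mul_le_mul_left hcard Nat.card_pos

theorem exists_isNRT_isLeftT [Finite G] (H : Subgroup G) : ∃ S, IsNRT H S ∧ IsLeftT H S := by
  classical
  obtain ⟨f, hf, hx⟩ := exists_injective_mk_inv_eq_mk H
  choose x hx_inv hx_mk using hx
  have hx1 : x (1 : G) ∈ H := by simpa [QuotientGroup.eq] using hx_inv (1 : G)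
  set y := update x (1 : G) 1
  have hy_inv : ∀ q, (((y q)⁻¹ : G) : G ⧸ H) = q := by
    intro q
    rcases eq_or_ne q (1 : G) with rfl | hq
    · simp [y]
    · simp [y, hq, hx_inv]
  have hy_mk : (QuotientGroup.mk : G → G ⧸ H) ∘ y = f := by
    funext q
    rcases eq_or_ne q (1 : G) with rfl | hq
    · simp [y, ← hx_mk, QuotientGroup.eq, hx1]
    · simp [y, hq, hx_mk]
  refine ⟨range y, isNRT_range ⟨_, update_self _ _ _⟩ hy_inv, ?_⟩
  rw [isLeftT_iff_bijOn_mk]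
  exact bijOn_range_univ (hy_mk ▸ Finite.injective_iff_bijective.mp hf)

theorem exists_isNRT_superset_s12 {A : Set G} (h1 : (1 : G) ∈ A)
    (hA : InjOn (fun a : G ↦ ((a⁻¹ : G) : G ⧸ H)) A) : ∃ T, A ⊆ T ∧ IsNRT H T := by
  classical
  let y : G ⧸ H → G := fun q ↦
    if h : ∃ a ∈ A, ((a⁻¹ : G) : G ⧸ H) = q then h.choose else q.out⁻¹
  have hy : ∀ q, (((y q)⁻¹ : G) : G ⧸ H) = q := by
    intro q
    simp only [y]
    split_ifs with h
    · exact h.choose_spec.2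
    · simp
  have hAy : ∀ a ∈ A, y ((a⁻¹ : G) : G ⧸ H) = a := by
    intro a ha
    have h : ∃ b ∈ A, ((b⁻¹ : G) : G ⧸ H) = a⁻¹ := ⟨a, ha, rfl⟩
    simp only [y, dif_pos h]
    exact hA h.choose_spec.1 ha h.choose_spec.2
  exact ⟨range y, fun a ha ↦ ⟨_, hAy a ha⟩, isNRT_range ⟨_, hAy 1 h1⟩ hy⟩

theorem exists_isNRT_not_isLeftT (hH : ¬ H.Normal) : ∃ T, IsNRT H T ∧ ¬ IsLeftT H T := by
  obtain ⟨g, h, hh, hgh⟩ : ∃ g, ∃ h ∈ H, g * h * g⁻¹ ∉ H := by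
    by_contra! hc
    exact hH ⟨fun h hh g ↦ hc g h hh⟩
  have hg : g ∉ H := fun hg ↦ hgh (H.mul_mem (H.mul_mem hg hh) (H.inv_mem hg))
  have hgh' : g * h ∉ H := fun hgh' ↦ hg (by simpa using H.mul_mem hgh' (H.inv_mem hh))
  have hgh'' : g * (g * h)⁻¹ ∉ H := fun hgh'' ↦ hgh (by simpa [mul_assoc] using H.inv_mem hgh'')
  have hinj : InjOn (fun a : G ↦ ((a⁻¹ : G) : G ⧸ H)) {1, g, g * h} := by
    rintro a (rfl | rfl | rfl) b (rfl | rfl | rfl) hab <;>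
      first
      | rfl
      | simp only [QuotientGroup.eq, inv_inv, one_mul, inv_one, mul_one, inv_mem_iff] at hab
        contradiction
  obtain ⟨T, hAT, hT⟩ := exists_isNRT_superset_s12 (by simp) hinj
  refine ⟨T, hT, fun hTL ↦ hgh ?_⟩
  have : g = g * h := (isLeftT_iff_bijOn_mk.mp hTL).injOn (hAT (by simp)) (hAT (by simp))
    (QuotientGroup.eq.mpr (by simpa using hh))
  simp [left_eq_mul.mp this]

end Transversals

theorem stmt_12 [Finite G] (H : Subgroup G)
    (hiso : ∀ S T : Set G, ∀ opS opT : G → G → G,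
      IsNRT H S → IsNRT H T → IsOp H S opS → IsOp H T opT →
      ∃ p : G → G, Set.BijOn p S T ∧ p 1 = 1 ∧
        ∀ x ∈ S, ∀ y ∈ S, p (opS x y) = opT (p x) (p y)) :
    H.Normal := by
  by_contra hH
  obtain ⟨S, hS, hSL⟩ := exists_isNRT_isLeftT H
  obtain ⟨T, hT, hTL⟩ := exists_isNRT_not_isLeftT hH
  obtain ⟨opS, hopS⟩ := hS.exists_isOp
  obtain ⟨opT, hopT⟩ := hT.exists_isOp
  obtain ⟨p, hp, hp1, hhom⟩ := hiso S T opS opT hS hT hopS hopT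
  exact hTL <| hT.isLeftT_of_exists_mul_mem <|
    hopS.forall_exists_mul_mem_of_iso hS hT hopT hp hp1 hhom fun x _ ↦ hSL.exists_mul_mem x
end

section
/- Let G be a group and H a finite subgroup of G. Then there exists a normalized right transversal of H in G that is simultaneously a left transversal (a common set of representatives for the left and right cosets of H in G, containing 1). -/
variable {G : Type*} [Group G]

/-! A double coset `HxH` is a finite union of right cosets of `H` and also of left cosets of `H`,
all of size `|H|`, so it contains as many right cosets as left cosets. Matching them inside each
double coset gives a bijection `φ` from right to left cosets; since `Ha ∩ bH` is nonempty as soon as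
`Ha` and `bH` lie in the same double coset, choosing a point of each `Ha ∩ φ (Ha)` (and `1` for
`H ∩ H`) gives the required transversal. -/

open DoubleCoset QuotientGroup Set

theorem nonempty_equiv_of_equiv_prod {P K A B : Type*} [Finite P] [Finite K] [Nonempty K]
    (eA : P ≃ K × A) (eB : P ≃ K × B) : Nonempty (A ≃ B) := by
  have : Finite (K × A) := .of_equiv P eA
  have : Finite (K × B) := .of_equiv P eB
  have : Finite A := .prod_right K
  have : Finite B := .prod_right K
  have hcard := Nat.card_congr (eA.symm.trans eB)
  rw [Nat.card_prod, Nat.card_prod] at hcard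
  exact Finite.card_eq.1 (Nat.eq_of_mul_eq_mul_left Nat.card_pos hcard)

namespace QuotientGroup

lemma mk''_mul_of_mem {H : Subgroup G} {h : G} (hh : h ∈ H) (a : G) :
    (Quotient.mk'' (h * a) : Quotient (rightRel H)) = Quotient.mk'' a :=
  Quotient.sound' (rightRel_apply.2 (by simpa using inv_mem hh))

noncomputable def preimageMk''EquivSubgroupProdSet (H : Subgroup G)
    (t : Set (Quotient (rightRel H))) : (Quotient.mk'' ⁻¹' t : Set G) ≃ H × t where
  toFun x :=
    (⟨x * (Quotient.mk'' x.1 : Quotient (rightRel H)).out⁻¹,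
      rightRel_apply.1 (Quotient.exact' (Quotient.out_eq' _))⟩, ⟨Quotient.mk'' x, x.2⟩)
  invFun p := ⟨p.1 * p.2.1.out, by
    show Quotient.mk'' _ ∈ t
    rw [mk''_mul_of_mem p.1.2, Quotient.out_eq']
    exact p.2.2⟩
  left_inv x := Subtype.ext (inv_mul_cancel_right _ _)
  right_inv p := by
    ext <;> simp [mk''_mul_of_mem p.1.2]

end QuotientGroup

namespace DoubleCoset

variable {H K : Subgroup G}

lemma finite_quotToDoubleCoset [Finite H] [Finite K] (q : DoubleCoset.Quotient (H : Set G) K) :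
    (quotToDoubleCoset H K q).Finite := by
  rw [quotToDoubleCoset, doubleCoset_eq_image2]
  exact (toFinite _).image2 _ (toFinite _)

variable (H K) in
def ofLeftCoset : G ⧸ K → DoubleCoset.Quotient (H : Set G) K :=
  _root_.Quotient.lift (DoubleCoset.mk H K) fun a b hab =>
    (DoubleCoset.eq H K a b).2 ⟨1, H.one_mem, a⁻¹ * b, leftRel_apply.1 hab, by group⟩

variable (H K) in
def ofRightCoset : _root_.Quotient (rightRel H) → DoubleCoset.Quotient (H : Set G) K :=
  _root_.Quotient.lift (DoubleCoset.mk H K) fun a b hab =>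
    (DoubleCoset.eq H K a b).2 ⟨b * a⁻¹, rightRel_apply.1 hab, 1, K.one_mem, by group⟩

lemma preimage_ofLeftCoset (q : DoubleCoset.Quotient (H : Set G) K) :
    (QuotientGroup.mk ⁻¹' {b | ofLeftCoset H K b = q} : Set G) = quotToDoubleCoset H K q := by
  ext x
  exact (mem_quotToDoubleCoset_iff q x).symm

lemma preimage_ofRightCoset (q : DoubleCoset.Quotient (H : Set G) K) :
    (Quotient.mk'' ⁻¹' {a | ofRightCoset H K a = q} : Set G) = quotToDoubleCoset H K q := by
  ext x
  exact (mem_quotToDoubleCoset_iff q x).symm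

lemma nonempty_fiber_ofRightCoset_equiv_fiber_ofLeftCoset [Finite H]
    (q : DoubleCoset.Quotient (H : Set G) H) :
    Nonempty ({a // ofRightCoset H H a = q} ≃ {b // ofLeftCoset H H b = q}) := by
  have := (finite_quotToDoubleCoset q).to_subtype
  exact nonempty_equiv_of_equiv_prod
    ((Equiv.setCongr (preimage_ofRightCoset q)).symm.trans (preimageMk''EquivSubgroupProdSet H _))
    ((Equiv.setCongr (preimage_ofLeftCoset q)).symm.trans (preimageMkEquivSubgroupProdSet H _))

lemma exists_equiv_ofLeftCoset_eq [Finite H] :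
    ∃ φ : _root_.Quotient (rightRel H) ≃ G ⧸ H, ∀ a, ofLeftCoset H H (φ a) = ofRightCoset H H a :=
  ⟨.ofFiberEquiv fun q => (nonempty_fiber_ofRightCoset_equiv_fiber_ofLeftCoset q).some,
    Equiv.ofFiberEquiv_map _⟩

lemma exists_mk''_eq_and_mk_eq {a : _root_.Quotient (rightRel H)} {b : G ⧸ K}
    (hab : ofRightCoset H K a = ofLeftCoset H K b) :
    ∃ g : G, Quotient.mk'' g = a ∧ (g : G ⧸ K) = b := by
  induction a using Quotient.inductionOn' with | h x => ?_
  induction b using QuotientGroup.induction_on with | H y => ?_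
  obtain ⟨h, hh, k, hk, rfl⟩ := (DoubleCoset.eq H K x y).1 hab
  exact ⟨h * x, mk''_mul_of_mem hh x, (mk_mul_of_mem (h * x) hk).symm⟩

lemma eq_mk_one_of_ofLeftCoset_eq (hHK : H ≤ K) {b : G ⧸ K}
    (hb : ofLeftCoset H K b = DoubleCoset.mk H K 1) : b = ((1 : G) : G ⧸ K) := by
  induction b using QuotientGroup.induction_on with | H y => ?_
  obtain ⟨h, hh, k, hk, rfl⟩ := (DoubleCoset.eq H K 1 y).1 hb.symm
  exact QuotientGroup.eq.2 (by simpa using K.inv_mem (K.mul_mem (hHK hh) hk))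

end DoubleCoset

section Transversal

variable {H : Subgroup G}

lemma isNRT_range_s13 {f : Quotient (rightRel H) → G} (hf : ∀ q, Quotient.mk'' (f q) = q)
    (h1 : (1 : G) ∈ range f) : IsNRT H (range f) := by
  refine ⟨h1, fun g => ⟨f (Quotient.mk'' g), ⟨mem_range_self _, ?_⟩, ?_⟩⟩
  · exact rightRel_apply.1 (Quotient.exact' (hf _).symm)
  · rintro _ ⟨⟨q, rfl⟩, hq⟩
    exact congrArg f ((hf q).symm.trans (Quotient.sound' (rightRel_apply.2 hq)).symm)

lemma isLeftT_range {f : G ⧸ H → G} (hf : ∀ q, (f q : G ⧸ H) = q) : IsLeftT H (range f) := by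
  refine fun g => ⟨f g, ⟨mem_range_self _, QuotientGroup.eq.1 (hf g).symm⟩, ?_⟩
  rintro _ ⟨⟨q, rfl⟩, hq⟩
  exact congrArg f ((hf q).symm.trans (QuotientGroup.eq.2 hq).symm)

lemma exists_section_mk_eq_of_ofLeftCoset_eq {φ : Quotient (rightRel H) → G ⧸ H}
    (hφ : ∀ a, ofLeftCoset H H (φ a) = ofRightCoset H H a) :
    ∃ s : Quotient (rightRel H) → G,
      (∀ a, Quotient.mk'' (s a) = a) ∧ (∀ a, (s a : G ⧸ H) = φ a) ∧ s (Quotient.mk'' 1) = 1 := by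
  have hrep : ∀ a, ∃ g : G, Quotient.mk'' g = a ∧ (g : G ⧸ H) = φ a ∧
      (a = Quotient.mk'' 1 → g = 1) := by
    intro a
    by_cases ha : a = Quotient.mk'' 1
    · subst ha
      exact ⟨1, rfl, (eq_mk_one_of_ofLeftCoset_eq le_rfl (hφ _)).symm, fun _ => rfl⟩
    · obtain ⟨g, hga, hgb⟩ := exists_mk''_eq_and_mk_eq (hφ a).symm
      exact ⟨g, hga, hgb, fun h => absurd h ha⟩
  choose s hs_right hs_left hs_one using hrep
  exact ⟨s, hs_right, hs_left, hs_one _ rfl⟩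

end Transversal

theorem stmt_13 (H : Subgroup G) [Finite H] :
    ∃ S : Set G, IsNRT H S ∧ IsLeftT H S := by
  obtain ⟨φ, hφ⟩ := exists_equiv_ofLeftCoset_eq (H := H)
  obtain ⟨s, hs_right, hs_left, hs_one⟩ := exists_section_mk_eq_of_ofLeftCoset_eq hφ
  refine ⟨range s, isNRT_range_s13 hs_right ⟨_, hs_one⟩, ?_⟩
  rw [← EquivLike.range_comp s φ.symm]
  exact isLeftT_range fun q => (hs_left _).trans (φ.apply_symm_apply q)
end

section
/- Let G be a group, H a subgroup, S a normalized right transversal of H in G. If S is a left transversal of H in G, then for every x ∈ S the map σ_x : H → H defined by xh = σ_x(h)·(xθh) is surjective. -/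
variable {G : Type*} [Group G]

/-
Given `h' ∈ H`, let `s ∈ S` represent the left coset `h'⁻¹ x H` and put `h = x⁻¹ h' s ∈ H`.
Then `x h = h' s` is a factorization of `x h` in `H · S`, which is unique since `S` is a
right transversal, so `σ_x(h) = h'`.
-/

namespace IsNRT

variable {H : Subgroup G} {S : Set G}

theorem eq_of_mul_eq (hS : IsNRT H S) {a b s t : G} (ha : a ∈ H) (hb : b ∈ H)
    (hs : s ∈ S) (ht : t ∈ S) (h : a * s = b * t) : a = b := by
  obtain ⟨u, -, hu⟩ := hS.2 (a * s)
  have hsu : s = u := hu s ⟨hs, by simpa using H.inv_mem ha⟩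
  have htu : t = u := hu t ⟨ht, by simpa [h] using H.inv_mem hb⟩
  rw [hsu, ← htu] at h
  exact mul_right_cancel h

end IsNRT

theorem IsSig.eq_of_mul_eq {H : Subgroup G} {S : Set G} {sig : G → G → G}
    (hsig : IsSig H S sig) (hS : IsNRT H S) {x h h' s : G} (hx : x ∈ S) (hh : h ∈ H)
    (hh' : h' ∈ H) (hs : s ∈ S) (hxh : x * h = h' * s) : sig x h = h' := by
  obtain ⟨hσH, hθS⟩ := hsig x hx h hh
  exact hS.eq_of_mul_eq hσH hh' hθS hs (by rw [mul_inv_cancel_left, hxh])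

theorem stmt_15 (H : Subgroup G) (S : Set G) (hS : IsNRT H S)
    (sig : G → G → G) (hsig : IsSig H S sig)
    (hleft : IsLeftT H S) :
    ∀ x ∈ S, ∀ h' ∈ H, ∃ h ∈ H, sig x h = h' := by
  intro x hx h' hh'
  obtain ⟨s, ⟨hs, hcoset⟩, -⟩ := hleft (h'⁻¹ * x)
  have hh : x⁻¹ * h' * s ∈ H := by simpa [mul_assoc] using hcoset
  exact ⟨_, hh, hsig.eq_of_mul_eq hS hx hh hh' hs (by group)⟩
end
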